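/- Let B be a C*-algebra, A ⊆ B a closed *-subalgebra, and M ⊆ B a closed linear subspace such that M equals the closed linear span of {aψ : a ∈ A, ψ ∈ M} and ψ*ψ' ∈ A for all ψ, ψ' ∈ M. For r ≥ 1 let M_r denote the closed linear span in B of {ψ₁ψ₂⋯ψ_r : ψ₁, …, ψ_r ∈ M}. Then for every r ≥ 1: (i) M_r equals the closed linear span of {aφ : a ∈ A, φ ∈ M_r}; and (ii) the closed linear span N_r of {φ'φ* : φ, φ' ∈ M_r} equals the closed linear span of {aT : a ∈ A, T ∈ N_r}. -/
import Mathlib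


/-- The closed linear span (over `ℂ`) of a subset of a normed space. -/
def closedSpan {B : Type*} [NonUnitalNormedRing B] [NormedSpace ℂ B]
    (S : Set B) : Set B :=
  closure (↑(Submodule.span ℂ S) : Set B)

/-- `prodSet M r` is the set of `(r+1)`-fold products `ψ₁ ψ₂ ⋯ ψ_{r+1}` of elements of `M`;
thus, for `r ≥ 1`, the `r`-fold products of elements of `M` form the set `prodSet M (r-1)`. -/
def prodSet {B : Type*} [Mul B] (M : Set B) : ℕ → Set B
  | 0 => M
  | r + 1 => {x : B | ∃ ψ ∈ M, ∃ y ∈ prodSet M r, x = ψ * y}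

/-- `N_r`, the closed linear span of `{φ' φ* : φ, φ' ∈ M_r}` where
`M_r = closedSpan (prodSet M (r-1))` is the closed span of the `r`-fold products. -/
def gradeZeroPiece {B : Type*} [NonUnitalNormedRing B] [StarRing B] [NormedSpace ℂ B]
    (M : Set B) (r : ℕ) : Set B :=
  closedSpan {x : B | ∃ φ ∈ closedSpan (prodSet M r), ∃ φ' ∈ closedSpan (prodSet M r),
    x = φ' * star φ}

section Aux
variable {B : Type*} [NonUnitalNormedRing B] [NormedSpace ℂ B]

lemma subset_closedSpan' (S : Set B) : S ⊆ closedSpan S :=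
  fun _ hx => subset_closure (Submodule.subset_span hx)

lemma closedSpan_min' {S T : Set B} (h : S ⊆ closedSpan T) :
    closedSpan S ⊆ closedSpan T := by
  have h1 : Submodule.span ℂ S ≤ (Submodule.span ℂ T).topologicalClosure := by
    rw [Submodule.span_le]
    intro x hx
    have := h hx
    rwa [Submodule.topologicalClosure_coe]
  have h2 : (↑(Submodule.span ℂ S) : Set B) ⊆ ↑((Submodule.span ℂ T).topologicalClosure) := h1
  have := closure_minimal h2 (Submodule.isClosed_topologicalClosure _)
  rwa [Submodule.topologicalClosure_coe] at this

lemma closedSpan_mono' {S T : Set B} (h : S ⊆ T) : closedSpan S ⊆ closedSpan T :=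
  closedSpan_min' (h.trans (subset_closedSpan' T))

variable [IsScalarTower ℂ B B] [SMulCommClass ℂ B B]

lemma clm_mem_closedSpan' (L : B →L[ℂ] B) {S T : Set B}
    (h : L '' S ⊆ closedSpan T) {x : B}
    (hx : x ∈ closedSpan S) : L x ∈ closedSpan T := by
  have h1 : L '' closure (↑(Submodule.span ℂ S) : Set B)
      ⊆ closure (L '' ↑(Submodule.span ℂ S)) :=
    image_closure_subset_closure_image L.continuous
  have h2 : L '' ↑(Submodule.span ℂ S) = ↑(Submodule.span ℂ (L '' S)) := by
    have := Submodule.map_span (L : B →ₗ[ℂ] B) S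
    have h4 : Submodule.map (L : B →ₗ[ℂ] B) (Submodule.span ℂ S) = Submodule.span ℂ (L '' S) := by
      rw [this]; congr 1
    calc L '' ↑(Submodule.span ℂ S) = ↑(Submodule.map (L : B →ₗ[ℂ] B) (Submodule.span ℂ S)) := by
          rw [Submodule.map_coe]; rfl
      _ = ↑(Submodule.span ℂ (L '' S)) := by rw [h4]
  have h3 : L x ∈ closedSpan (L '' S) := by
    show L x ∈ closure (↑(Submodule.span ℂ (L '' S)) : Set B)
    rw [← h2]; exact h1 (Set.mem_image_of_mem L hx)
  exact closedSpan_min' h h3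

/-- Left multiplication by a fixed element lands in the closed span. -/
lemma mulLeft_mem_closedSpan' (a : B) {S T : Set B}
    (h : ∀ s ∈ S, a * s ∈ closedSpan T) {x : B} (hx : x ∈ closedSpan S) :
    a * x ∈ closedSpan T := by
  have := clm_mem_closedSpan' (ContinuousLinearMap.mul ℂ B a)
    (S := S) (T := T) (by rintro _ ⟨s, hs, rfl⟩; exact h s hs) hx
  simpa using this

/-- Right multiplication by a fixed element lands in the closed span. -/
lemma mulRight_mem_closedSpan' (y : B) {S T : Set B}
    (h : ∀ s ∈ S, s * y ∈ closedSpan T) {x : B} (hx : x ∈ closedSpan S) :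
    x * y ∈ closedSpan T := by
  have := clm_mem_closedSpan' ((ContinuousLinearMap.mul ℂ B).flip y)
    (S := S) (T := T) (by rintro _ ⟨s, hs, rfl⟩; exact h s hs) hx
  simpa using this

end Aux

/-- Non-degeneracy propagates to powers: if `M` is a closed linear subspace of a C*-algebra
`B` with `M = closed span of A·M` and `M* M ⊆ A` for a closed *-subalgebra `A ⊆ B`, then for
every `r ≥ 1` (indexed here by `r+1`-fold products, `r : ℕ`):
(i) `M_r` equals the closed linear span of `A · M_r`, and
(ii) `N_r`, the closed span of `M_r M_r*`, equals the closed linear span of `A · N_r`. -/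
theorem nondegeneracy_propagates_to_powers
    {B : Type*} [NonUnitalNormedRing B] [StarRing B] [CStarRing B]
    [CompleteSpace B] [NormedSpace ℂ B] [IsScalarTower ℂ B B] [SMulCommClass ℂ B B]
    [StarModule ℂ B]
    -- `A` is a closed *-subalgebra of `B`
    (A : Set B) (hAclosed : IsClosed A)
    (hA0 : (0 : B) ∈ A)
    (hAadd : ∀ a ∈ A, ∀ b ∈ A, a + b ∈ A)
    (hAsmul : ∀ (c : ℂ), ∀ a ∈ A, c • a ∈ A)
    (hAmul : ∀ a ∈ A, ∀ b ∈ A, a * b ∈ A)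
    (hAstar : ∀ a ∈ A, star a ∈ A)
    -- `M` is a closed linear subspace of `B`
    (M : Submodule ℂ B) (hMclosed : IsClosed (M : Set B))
    -- `M` equals the closed linear span of `A · M`
    (hM : (M : Set B) = closedSpan {x : B | ∃ a ∈ A, ∃ ψ ∈ M, x = a * ψ})
    -- `M* M ⊆ A`
    (hinner : ∀ ψ ∈ M, ∀ ψ' ∈ M, star ψ * ψ' ∈ A) :
    ∀ r : ℕ,
      -- (i) `M_r` is the closed linear span of `A · M_r`
      closedSpan (prodSet (M : Set B) r)
        = closedSpan {x : B | ∃ a ∈ A, ∃ φ ∈ closedSpan (prodSet (M : Set B) r),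
            x = a * φ} ∧
      -- (ii) `N_r` is the closed linear span of `A · N_r`
      gradeZeroPiece (M : Set B) r
        = closedSpan {x : B | ∃ a ∈ A, ∃ T ∈ gradeZeroPiece (M : Set B) r, x = a * T} := by
  -- A · M ⊆ M
  have hAM : ∀ a ∈ A, ∀ ψ ∈ (M : Set B), a * ψ ∈ (M : Set B) := by
    intro a ha ψ hψ
    rw [hM]
    exact subset_closedSpan' _ ⟨a, ha, ψ, hψ, rfl⟩
  -- A · prodSet ⊆ prodSet
  have hAprod : ∀ r : ℕ, ∀ a ∈ A, ∀ x ∈ prodSet (M : Set B) r,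
      a * x ∈ prodSet (M : Set B) r := by
    intro r
    cases r with
    | zero => exact hAM
    | succ r =>
      rintro a ha x ⟨ψ, hψ, y, hy, rfl⟩
      exact ⟨a * ψ, hAM a ha ψ hψ, y, hy, by rw [mul_assoc]⟩
  intro r
  set Mr : Set B := closedSpan (prodSet (M : Set B) r) with hMr
  -- A · Mr ⊆ Mr
  have hAMr : ∀ a ∈ A, ∀ φ ∈ Mr, a * φ ∈ Mr := by
    intro a ha φ hφ
    exact mulLeft_mem_closedSpan' a
      (fun s hs => subset_closedSpan' _ (hAprod r a ha s hs)) hφ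
  constructor
  · -- Part (i)
    apply le_antisymm
    · -- forward: prodSet ⊆ closedSpan (A · Mr)
      apply closedSpan_min'
      cases r with
      | zero =>
        intro ψ hψ
        have hψ' : ψ ∈ closedSpan {x : B | ∃ a ∈ A, ∃ ψ ∈ M, x = a * ψ} := by
          rw [← hM]; exact hψ
        refine closedSpan_min' ?_ hψ'
        rintro _ ⟨a, ha, ψ', hψ', rfl⟩
        exact subset_closedSpan' _ ⟨a, ha, ψ', subset_closedSpan' _ hψ', rfl⟩
      | succ r =>
        rintro _ ⟨ψ, hψ, y, hy, rfl⟩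
        have hψ' : ψ ∈ closedSpan {x : B | ∃ a ∈ A, ∃ ψ ∈ M, x = a * ψ} := by
          rw [← hM]; exact hψ
        refine mulRight_mem_closedSpan' y ?_ hψ'
        rintro _ ⟨a, ha, ψ', hψ', rfl⟩
        rw [mul_assoc]
        exact subset_closedSpan' _
          ⟨a, ha, ψ' * y, subset_closedSpan' _ ⟨ψ', hψ', y, hy, rfl⟩, rfl⟩
    · -- reverse
      apply closedSpan_min'
      rintro _ ⟨a, ha, φ, hφ, rfl⟩
      exact hAMr a ha φ hφ
  · -- Part (ii)
    set G : Set B := {x : B | ∃ φ ∈ Mr, ∃ φ' ∈ Mr, x = φ' * star φ} with hG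
    show closedSpan G = _
    -- A · G ⊆ G
    have hAG : ∀ a ∈ A, ∀ x ∈ G, a * x ∈ G := by
      rintro a ha _ ⟨φ, hφ, φ', hφ', rfl⟩
      exact ⟨φ, hφ, a * φ', hAMr a ha φ' hφ', by rw [mul_assoc]⟩
    apply le_antisymm
    · -- forward: G ⊆ closedSpan (A · N)
      apply closedSpan_min'
      rintro _ ⟨φ, hφ, φ', hφ', rfl⟩
      -- φ' ∈ closedSpan (A · Mr)
      have hφ'' : φ' ∈ closedSpan {x : B | ∃ a ∈ A, ∃ ψ ∈ Mr, x = a * ψ} := by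
        refine closedSpan_min' ?_ hφ'
        intro s hs
        cases r with
        | zero =>
          have hs' : s ∈ closedSpan {x : B | ∃ a ∈ A, ∃ ψ ∈ M, x = a * ψ} := by
            rw [← hM]; exact hs
          refine closedSpan_min' ?_ hs'
          rintro _ ⟨a, ha, ψ', hψ', rfl⟩
          exact subset_closedSpan' _ ⟨a, ha, ψ', subset_closedSpan' _ hψ', rfl⟩
        | succ r =>
          obtain ⟨ψ, hψ, y, hy, rfl⟩ := hs
          have hψ' : ψ ∈ closedSpan {x : B | ∃ a ∈ A, ∃ ψ ∈ M, x = a * ψ} := by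
            rw [← hM]; exact hψ
          refine mulRight_mem_closedSpan' y ?_ hψ'
          rintro _ ⟨a, ha, ψ'', hψ'', rfl⟩
          rw [mul_assoc]
          exact subset_closedSpan' _
            ⟨a, ha, ψ'' * y, subset_closedSpan' _ ⟨ψ'', hψ'', y, hy, rfl⟩, rfl⟩
      refine mulRight_mem_closedSpan' (star φ) ?_ hφ''
      rintro _ ⟨a, ha, ψ, hψ, rfl⟩
      rw [mul_assoc]
      exact subset_closedSpan' _
        ⟨a, ha, ψ * star φ, subset_closedSpan' _ ⟨φ, hφ, ψ, hψ, rfl⟩, rfl⟩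
    · -- reverse
      apply closedSpan_min'
      rintro _ ⟨a, ha, T, hT, rfl⟩
      exact mulLeft_mem_closedSpan' a
        (fun s hs => subset_closedSpan' _ (hAG a ha s hs)) hT
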